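/- For a path connected space Z and points p, q ∈ Z, the topological fundamental groups π₁(Z,p) and π₁(Z,q) are isomorphic as topological groups (the change-of-basepoint isomorphism induced by a path from p to q is a homeomorphism). -/

import Mathlib

open unitInterval Topology

noncomputable section

/-- The topological fundamental group: path components of the based loop space
(compact-open topology), with the quotient topology. -/
def piTop (Z : Type*) [TopologicalSpace Z] (z : Z) : Type _ :=
  Quotient (pathSetoid (Path z z))

instance (Z : Type*) [TopologicalSpace Z] (z : Z) : TopologicalSpace (piTop Z z) :=
  instTopologicalSpaceQuotient

/-- The class of a loop in the topological fundamental group. -/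
def piMk {Z : Type*} [TopologicalSpace Z] {z : Z} (γ : Path z z) : piTop Z z :=
  Quotient.mk _ γ

/-! Conjugation is a homotopy equivalence of loop spaces, with homotopy inverse conjugation by the
reversed path; since homotopic loops lie in one path component of the loop space, it descends to
mutually inverse continuous maps of the quotients, and it respects concatenation up to homotopy. -/

section LoopConj

variable {Z : Type*} [TopologicalSpace Z] {x y : Z}

/-- A homotopy is a path in the path space, through its time slices. -/
theorem Path.Homotopic.joined {f g : Path x y} (h : f.Homotopic g) : Joined f g := by
  obtain ⟨H⟩ := h
  exact ⟨⟨⟨H.eval, Path.continuous_uncurry_iff.mp H.continuous⟩, H.eval_zero, H.eval_one⟩⟩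

def loopConj (γ : Path x y) : C(Path x x, Path y y) where
  toFun f := (γ.symm.trans f).trans γ
  continuous_toFun := by fun_prop

theorem loopConj_apply (γ : Path x y) (f : Path x x) :
    loopConj γ f = (γ.symm.trans f).trans γ := rfl

theorem loopConj_symm_loopConj_homotopic (γ : Path x y) (f : Path x x) :
    (loopConj γ.symm (loopConj γ f)).Homotopic f := by
  rw [loopConj_apply, loopConj_apply, ← Path.Homotopic.Quotient.eq]
  simp only [Path.Homotopic.Quotient.mk_trans, Path.Homotopic.Quotient.mk_symm]
  grind

theorem loopConj_trans_homotopic (γ : Path x y) (f g : Path x x) :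
    (loopConj γ (f.trans g)).Homotopic ((loopConj γ f).trans (loopConj γ g)) := by
  rw [loopConj_apply, loopConj_apply, loopConj_apply, ← Path.Homotopic.Quotient.eq]
  simp only [Path.Homotopic.Quotient.mk_trans, Path.Homotopic.Quotient.mk_symm]
  grind

def piTop.map (F : C(Path x x, Path y y)) : C(piTop Z x, piTop Z y) where
  toFun := Quotient.map F fun _ _ h => h.map F.continuous
  continuous_toFun := continuous_quot_lift _ (continuous_quotient_mk'.comp F.continuous)

theorem piTop.map_loopConj_symm_map_loopConj (γ : Path x y) (a : piTop Z x) :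
    piTop.map (loopConj γ.symm) (piTop.map (loopConj γ) a) = a :=
  Quotient.inductionOn a fun f => Quotient.sound (loopConj_symm_loopConj_homotopic γ f).joined

def piTop.conjHomeomorph (γ : Path x y) : piTop Z x ≃ₜ piTop Z y where
  toFun := piTop.map (loopConj γ)
  invFun := piTop.map (loopConj γ.symm)
  left_inv := piTop.map_loopConj_symm_map_loopConj γ
  right_inv a := by
    simpa only [Path.symm_symm] using piTop.map_loopConj_symm_map_loopConj γ.symm a
  continuous_toFun := (piTop.map _).continuous
  continuous_invFun := (piTop.map _).continuous

theorem piTop.conjHomeomorph_piMk (γ : Path x y) (f : Path x x) :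
    piTop.conjHomeomorph γ (piMk f) = piMk (loopConj γ f) := rfl

theorem piTop.conjHomeomorph_piMk_trans (γ : Path x y) (f g : Path x x) :
    piTop.conjHomeomorph γ (piMk (f.trans g)) = piMk ((loopConj γ f).trans (loopConj γ g)) :=
  Quotient.sound (loopConj_trans_homotopic γ f g).joined

end LoopConj

/-- for a path connected space `Z` the topological fundamental
groups at any two basepoints are isomorphic as topological groups: the
change-of-basepoint map `[f] ↦ [γ⁻¹ · f · γ]` is a homeomorphism preserving
concatenation. -/
theorem change_of_basepoint_homeomorphism
    (Z : Type*) [TopologicalSpace Z] [PathConnectedSpace Z] (p q : Z) :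
    ∃ (φ : piTop Z p ≃ₜ piTop Z q) (γ : Path p q),
      (∀ f : Path p p, φ (piMk f) = piMk ((γ.symm.trans f).trans γ)) ∧
      (∀ f g : Path p p,
        φ (piMk (f.trans g)) =
          piMk (((γ.symm.trans f).trans γ).trans ((γ.symm.trans g).trans γ))) := by
  obtain ⟨γ⟩ := PathConnectedSpace.joined p q
  exact ⟨piTop.conjHomeomorph γ, γ, piTop.conjHomeomorph_piMk γ,
    piTop.conjHomeomorph_piMk_trans γ⟩
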